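/- arXiv:2012.08086 — 4 statements merged into one kernel-verified Lean document; each statement's English description precedes it below -/
import Mathlib

section
/- Let f : ℝ → ℝ be a bounded, twice continuously differentiable function with bounded second derivative. Then ‖f'‖_∞² ≤ 4 ‖f‖_∞ ‖f''‖_∞, where ‖·‖_∞ denotes the supremum norm on ℝ. -/
/-!
Taylor's formula with Lagrange remainder gives, for every `x` and every real `t`,
`f (x + t) = f x + f' x * t + f'' ξ * t ^ 2 / 2`, hence `f' x * t ≤ 2 M₀ + (M₂ / 2) t ^ 2`
with `M₀ = sup |f|` and `M₂ = sup |f''|`.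
A quadratic polynomial in `t` that is nonnegative everywhere has nonpositive discriminant,
which is exactly `f' x ^ 2 ≤ 4 M₀ M₂`.
-/

open Real

theorem exists_eq_add_deriv_mul_add_deriv_deriv_mul {f : ℝ → ℝ} (hf : ContDiff ℝ 2 f)
    (x t : ℝ) : ∃ ξ, f (x + t) = f x + deriv f x * t + deriv (deriv f) ξ * t ^ 2 / 2 := by
  rcases eq_or_ne t 0 with rfl | ht
  · exact ⟨x, by simp⟩
  have hne : x ≠ x + t := by simpa using ht
  obtain ⟨ξ, -, hξ⟩ :=
    taylor_mean_remainder_lagrange_iteratedDeriv (n := 1) hne hf.contDiffOn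
  have hderiv : derivWithin f (Set.uIcc x (x + t)) x = deriv f x :=
    ((hf.differentiable two_ne_zero) x).derivWithin
      (uniqueDiffOn_uIcc hne x Set.left_mem_uIcc)
  refine ⟨ξ, ?_⟩
  norm_num [taylorWithinEval_succ, iteratedDeriv_succ, hderiv] at hξ
  linarith

section Landau

variable {f : ℝ → ℝ} {C₀ C₂ : ℝ}

theorem deriv_mul_le_of_abs_le (hf : ContDiff ℝ 2 f) (h₀ : ∀ y, |f y| ≤ C₀)
    (h₂ : ∀ y, |deriv (deriv f) y| ≤ C₂) (x t : ℝ) :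
    deriv f x * t ≤ 2 * C₀ + C₂ / 2 * t ^ 2 := by
  obtain ⟨ξ, hξ⟩ := exists_eq_add_deriv_mul_add_deriv_deriv_mul hf x t
  have hx := abs_le.mp (h₀ x)
  have hxt := abs_le.mp (h₀ (x + t))
  have hrem : -C₂ * t ^ 2 ≤ deriv (deriv f) ξ * t ^ 2 :=
    mul_le_mul_of_nonneg_right (neg_le_of_abs_le (h₂ ξ)) (sq_nonneg t)
  linarith

theorem sq_deriv_le_four_mul (hf : ContDiff ℝ 2 f) (h₀ : ∀ y, |f y| ≤ C₀)
    (h₂ : ∀ y, |deriv (deriv f) y| ≤ C₂) (x : ℝ) :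
    deriv f x ^ 2 ≤ 4 * C₀ * C₂ := by
  have hdiscrim := discrim_le_zero (a := C₂ / 2) (b := -deriv f x) (c := 2 * C₀) fun t => by
    nlinarith [deriv_mul_le_of_abs_le hf h₀ h₂ x t]
  rw [discrim] at hdiscrim
  linarith

end Landau

/-- Landau's inequality: for a bounded C² function `f : ℝ → ℝ` with bounded second
derivative, `‖f'‖_∞² ≤ 4 ‖f‖_∞ ‖f''‖_∞`, sup norms over ℝ. -/
theorem landau_inequality (f : ℝ → ℝ)
    (hf : ContDiff ℝ 2 f)
    (hfb : BddAbove (Set.range fun x => |f x|))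
    (hf''b : BddAbove (Set.range fun x => |deriv (deriv f) x|)) :
    (⨆ x : ℝ, |deriv f x|) ^ 2 ≤ 4 * (⨆ x : ℝ, |f x|) * ⨆ x : ℝ, |deriv (deriv f) x| := by
  set M₀ := ⨆ x : ℝ, |f x|
  set M₂ := ⨆ x : ℝ, |deriv (deriv f) x|
  have hbound : ∀ x, deriv f x ^ 2 ≤ 4 * M₀ * M₂ :=
    sq_deriv_le_four_mul hf (le_ciSup hfb) (le_ciSup hf''b)
  have hM : 0 ≤ 4 * M₀ * M₂ := by
    have : 0 ≤ M₀ := Real.iSup_nonneg fun _ => abs_nonneg _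
    have : 0 ≤ M₂ := Real.iSup_nonneg fun _ => abs_nonneg _
    positivity
  have hsup : ⨆ x, |deriv f x| ≤ √(4 * M₀ * M₂) :=
    Real.iSup_le (fun x => abs_le_sqrt (hbound x)) (sqrt_nonneg _)
  exact (le_sqrt (Real.iSup_nonneg fun _ => abs_nonneg _) hM).mp hsup
end

section
/- Let r > 1, κ ∈ ℝ, and let λ be a mask of type (r,κ). Then there is a constant a₃ > 0 such that for all m ≥ 1, ∫_{|x| ≥ m} |x λ''(x)| dx ≤ a₃ m^{-r} (log(m+1))^{-κ}. -/
/-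
On `(1, ∞)` a mask is the product of `t ^ (-r)`, `log (t + 1) ^ (-κ)` and `F (log t)`. Each factor
`φ` obeys symbol estimates `|φ|, |t φ'|, |t² φ''| ≲ w` with weight `w` equal to itself or to `1`,
and such estimates are stable under products and real powers; hence
`|x λ''(x)| ≲ x ^ (-r - 1) log (x + 1) ^ (-κ)` for `x > 1`. As `λ''` is even, the tail integral is
twice the integral over `(m, ∞)`. Because the logarithm varies slowly,
`log (t + 1) ^ (-κ) ≲ (t / m) ^ (r / 2) log (m + 1) ^ (-κ)` for `t ≥ m`, which leaves the integrable
power `m ^ (-r / 2) t ^ (-r / 2 - 1)`.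
-/

open Real MeasureTheory

/-- `lam` is a mask of type `(r, κ)` with constant `a₁` witnessed by `F`. -/
def IsMask (r κ : ℝ) (lam : ℝ → ℝ) : Prop :=
  (∀ x : ℝ, lam (-x) = lam x) ∧ ContDiff ℝ 2 lam ∧
    ∃ (F : ℝ → ℝ) (a₁ : ℝ), ContDiff ℝ 2 F ∧
      (∀ t : ℝ, 1 ≤ t → lam t = t ^ (-r) * (Real.log (t + 1)) ^ (-κ) * F (Real.log t)) ∧
      (∀ t : ℝ, 1 ≤ t → ∀ k : ℕ, k ≤ 2 → |iteratedDeriv k F t| ≤ a₁)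

open Set Filter Topology

theorem abs_mul_le_of_abs_le_of_abs_le {a b x y : ℝ} (ha : |a| ≤ x) (hb : |b| ≤ y) :
    |a * b| ≤ x * y := by
  rw [abs_mul]
  exact mul_le_mul ha hb (abs_nonneg _) ((abs_nonneg _).trans ha)

section Parity

variable {𝕜 E : Type*} [NontriviallyNormedField 𝕜] [NormedAddCommGroup E] [NormedSpace 𝕜 E]
  {f : 𝕜 → E}

theorem Function.Even.deriv (hf : f.Even) : (deriv f).Odd := fun x => by
  simpa [funext hf] using deriv_comp_neg f (-x)

theorem Function.Odd.deriv (hf : f.Odd) : (deriv f).Even := fun x => by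
  have hneg : (fun y => f (-y)) = -f := funext hf
  simpa [hneg, deriv.neg] using (deriv_comp_neg f x).symm

end Parity

theorem integral_abs_ge_eq_two_mul_of_even {f : ℝ → ℝ} (hf : f.Even) {m : ℝ} (hm : 0 < m) :
    ∫ x in {x : ℝ | m ≤ |x|}, f x = 2 * ∫ x in Ioi m, f x := by
  have hS : MeasurableSet {x : ℝ | m ≤ |x|} := measurableSet_le measurable_const measurable_abs
  have hind : {x : ℝ | m ≤ |x|}.indicator f = fun x => (Ici m).indicator f |x| := by
    ext x
    rcases abs_choice x with hx | hx <;>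
      simp [indicator, hx, hf x]
  rw [← integral_indicator hS, hind, integral_comp_abs, setIntegral_indicator measurableSet_Ici,
    inter_eq_right.mpr (Ici_subset_Ioi.mpr hm), integral_Ici_eq_integral_Ioi]

theorem ContDiff.exists_abs_iteratedDeriv_le_of_forall_ge {g : ℝ → ℝ} {n : ℕ}
    (hg : ContDiff ℝ n g) {a b c : ℝ} (hbd : ∀ u, b ≤ u → ∀ k ≤ n, |iteratedDeriv k g u| ≤ a) :
    ∃ A > 0, ∀ u, c ≤ u → ∀ k ≤ n, |iteratedDeriv k g u| ≤ A := by
  have hcont : ContinuousOn (fun u => ∑ k ∈ Finset.range (n + 1), |iteratedDeriv k g u|)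
      (Icc c b) :=
    (continuous_finsetSum _ fun k hk => (hg.continuous_iteratedDeriv k <| by
      exact_mod_cast Nat.lt_succ_iff.mp (Finset.mem_range.mp hk)).abs).continuousOn
  obtain ⟨B, hB⟩ := isCompact_Icc.exists_bound_of_continuousOn hcont
  refine ⟨|a| + |B| + 1, by positivity, fun u hu k hk => ?_⟩
  rcases le_or_gt b u with hbu | hub
  · linarith [hbd u hbu k hk, le_abs_self a, abs_nonneg B]
  · have hsum := hB u ⟨hu, hub.le⟩
    rw [norm_of_nonneg (by positivity)] at hsum
    have hk := Finset.single_le_sum (fun i _ => abs_nonneg (iteratedDeriv i g u))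
      (Finset.mem_range.mpr (Nat.lt_succ_of_le hk))
    linarith [le_abs_self B, abs_nonneg a]

def IsSymbol (w φ : ℝ → ℝ) : Prop :=
  ∃ C > 0, ∀ t, 1 < t → DifferentiableAt ℝ φ t ∧ DifferentiableAt ℝ (deriv φ) t ∧
    |φ t| ≤ C * w t ∧ |t * deriv φ t| ≤ C * w t ∧ |t ^ 2 * deriv (deriv φ) t| ≤ C * w t

namespace IsSymbol

variable {v w φ ψ : ℝ → ℝ}

theorem congr (h : IsSymbol w φ) (hψ : ∀ t, 1 < t → φ t = ψ t) : IsSymbol w ψ := by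
  obtain ⟨C, hC, hφ⟩ := h
  refine ⟨C, hC, fun t ht => ?_⟩
  have h0 : φ =ᶠ[𝓝 t] ψ := eventually_of_mem (Ioi_mem_nhds ht) hψ
  have h1 : deriv φ =ᶠ[𝓝 t] deriv ψ := h0.deriv
  obtain ⟨d0, d1, b0, b1, b2⟩ := hφ t ht
  exact ⟨d0.congr_of_eventuallyEq h0.symm, d1.congr_of_eventuallyEq h1.symm, h0.eq_of_nhds ▸ b0,
    h1.eq_of_nhds ▸ b1, h1.deriv_eq ▸ b2⟩

theorem mul (hφ : IsSymbol v φ) (hψ : IsSymbol w ψ) :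
    IsSymbol (fun t => v t * w t) (fun t => φ t * ψ t) := by
  obtain ⟨A, hA, hφ⟩ := hφ
  obtain ⟨B, hB, hψ⟩ := hψ
  refine ⟨4 * (A * B), by positivity, fun t ht => ?_⟩
  have hderiv : deriv (fun t => φ t * ψ t) =ᶠ[𝓝 t] deriv φ * ψ + φ * deriv ψ := by
    filter_upwards [Ioi_mem_nhds ht] with s hs
    exact deriv_mul (hφ s hs).1 (hψ s hs).1
  obtain ⟨d0, d1, a0, a1, a2⟩ := hφ t ht
  obtain ⟨e0, e1, b0, b1, b2⟩ := hψ t ht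
  have hd2 := (d1.hasDerivAt.mul e0.hasDerivAt).add (d0.hasDerivAt.mul e1.hasDerivAt)
  have hvw : 0 ≤ A * v t * (B * w t) :=
    mul_nonneg ((abs_nonneg _).trans a0) ((abs_nonneg _).trans b0)
  refine ⟨d0.mul e0, hd2.differentiableAt.congr_of_eventuallyEq hderiv, ?_, ?_, ?_⟩
  · calc |φ t * ψ t| ≤ A * v t * (B * w t) := abs_mul_le_of_abs_le_of_abs_le a0 b0
      _ ≤ 4 * (A * B) * (v t * w t) := by linarith
  · rw [hderiv.eq_of_nhds]
    calc |t * (deriv φ t * ψ t + φ t * deriv ψ t)|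
        = |(t * deriv φ t) * ψ t + φ t * (t * deriv ψ t)| := by ring_nf
      _ ≤ A * v t * (B * w t) + A * v t * (B * w t) :=
        (abs_add_le _ _).trans (add_le_add (abs_mul_le_of_abs_le_of_abs_le a1 b0)
          (abs_mul_le_of_abs_le_of_abs_le a0 b1))
      _ ≤ 4 * (A * B) * (v t * w t) := by linarith
  · rw [hderiv.deriv_eq, hd2.deriv]
    calc |t ^ 2 * (deriv (deriv φ) t * ψ t + deriv φ t * deriv ψ t
          + (deriv φ t * deriv ψ t + φ t * deriv (deriv ψ) t))|
        = |(t ^ 2 * deriv (deriv φ) t) * ψ t + 2 * ((t * deriv φ t) * (t * deriv ψ t))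
          + φ t * (t ^ 2 * deriv (deriv ψ) t)| := by ring_nf
      _ ≤ A * v t * (B * w t) + 2 * (A * v t * (B * w t)) + A * v t * (B * w t) := by
        refine (abs_add_le _ _).trans (add_le_add ((abs_add_le _ _).trans (add_le_add
          (abs_mul_le_of_abs_le_of_abs_le a2 b0) ?_)) (abs_mul_le_of_abs_le_of_abs_le a0 b2))
        rw [abs_mul, abs_two]
        exact mul_le_mul_of_nonneg_left (abs_mul_le_of_abs_le_of_abs_le a1 b1) zero_le_two
      _ = 4 * (A * B) * (v t * w t) := by ring

theorem rpow (hφ : IsSymbol φ φ) (hpos : ∀ t, 1 < t → 0 < φ t) (a : ℝ) :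
    IsSymbol (fun t => φ t ^ a) (fun t => φ t ^ a) := by
  obtain ⟨C, hC, hφ⟩ := hφ
  refine ⟨1 + |a| * C + |a * (a - 1)| * C ^ 2, by positivity, fun t ht => ?_⟩
  have hderiv : deriv (fun s => φ s ^ a) =ᶠ[𝓝 t] fun s => a * φ s ^ (a - 1) * deriv φ s := by
    filter_upwards [Ioi_mem_nhds ht] with s hs
    rw [((hφ s hs).1.hasDerivAt.rpow_const (Or.inl (hpos s hs).ne')).deriv]
    ring
  obtain ⟨d0, d1, -, b1, b2⟩ := hφ t ht
  have hφt := hpos t ht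
  have hd0 := d0.hasDerivAt.rpow_const (p := a) (Or.inl hφt.ne')
  have hd1 : HasDerivAt (fun s => a * φ s ^ (a - 1) * deriv φ s) _ t :=
    ((d0.hasDerivAt.rpow_const (p := a - 1) (Or.inl hφt.ne')).const_mul a).mul d1.hasDerivAt
  have hpow : 0 < φ t ^ a := rpow_pos_of_pos hφt a
  set q₁ := t * deriv φ t / φ t
  set q₂ := t ^ 2 * deriv (deriv φ) t / φ t
  have hq₁ : |q₁| ≤ C := by rw [abs_div, abs_of_pos hφt, div_le_iff₀ hφt]; exact b1
  have hq₂ : |q₂| ≤ C := by rw [abs_div, abs_of_pos hφt, div_le_iff₀ hφt]; exact b2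
  have e₁ : φ t ^ (a - 1) = φ t ^ a / φ t := rpow_sub_one hφt.ne' a
  have e₂ : φ t ^ (a - 1 - 1) = φ t ^ a / φ t / φ t := by rw [rpow_sub_one hφt.ne', e₁]
  refine ⟨hd0.differentiableAt, hd1.differentiableAt.congr_of_eventuallyEq hderiv, ?_, ?_, ?_⟩
  · rw [abs_of_pos hpow]
    exact le_mul_of_one_le_left hpow.le (by nlinarith [abs_nonneg a, abs_nonneg (a * (a - 1))])
  · have : t * (a * φ t ^ (a - 1) * deriv φ t) = a * q₁ * φ t ^ a := by
      rw [e₁]; simp only [q₁]; field_simp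
    rw [hderiv.eq_of_nhds, this, abs_mul, abs_of_pos hpow, abs_mul]
    refine mul_le_mul_of_nonneg_right ?_ hpow.le
    nlinarith [abs_nonneg a, abs_nonneg (a * (a - 1)), abs_nonneg q₁]
  · have : t ^ 2 * (a * (deriv φ t * (a - 1) * φ t ^ (a - 1 - 1)) * deriv φ t
        + a * φ t ^ (a - 1) * deriv (deriv φ) t) = (a * (a - 1) * q₁ ^ 2 + a * q₂) * φ t ^ a := by
      rw [e₁, e₂]; simp only [q₁, q₂]; field_simp
    rw [hderiv.deriv_eq, hd1.deriv, this, abs_mul, abs_of_pos hpow]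
    refine mul_le_mul_of_nonneg_right ?_ hpow.le
    calc |a * (a - 1) * q₁ ^ 2 + a * q₂| ≤ |a * (a - 1)| * |q₁| ^ 2 + |a| * |q₂| := by
          rw [← abs_pow, ← abs_mul, ← abs_mul]; exact abs_add_le _ _
      _ ≤ |a * (a - 1)| * C ^ 2 + |a| * C := by gcongr
      _ ≤ _ := by linarith

end IsSymbol

theorem isSymbol_id : IsSymbol (fun t => t) (fun t => t) := by
  refine ⟨1, one_pos, fun t ht => ?_⟩
  simp [abs_of_pos (by linarith : 0 < t), (by linarith : 0 ≤ t)]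

theorem isSymbol_log_add_one : IsSymbol (fun t => log (t + 1)) (fun t => log (t + 1)) := by
  have hlog2 : 0 < log 2 := log_pos one_lt_two
  refine ⟨1 + (log 2)⁻¹, by positivity, fun t ht => ?_⟩
  have hderiv : deriv (fun t => log (t + 1)) =ᶠ[𝓝 t] fun s => (s + 1)⁻¹ := by
    filter_upwards [Ioi_mem_nhds ht] with s hs
    exact (((hasDerivAt_id' s).add_const 1).log (by linarith [mem_Ioi.mp hs])).deriv.trans
      (one_div _)
  have hd2 : HasDerivAt (fun s => (s + 1)⁻¹) (-1 / (t + 1) ^ 2) t :=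
    ((hasDerivAt_id' t).add_const 1).inv (by linarith)
  have hL : log 2 ≤ log (t + 1) := log_le_log two_pos (by linarith)
  -- every term is at most `1`, and `1 ≤ log (t + 1) / log 2`
  have hone : 1 ≤ (1 + (log 2)⁻¹) * log (t + 1) := by
    have : 1 ≤ (log 2)⁻¹ * log (t + 1) := by rw [inv_mul_eq_div, one_le_div hlog2]; exact hL
    nlinarith
  have hτ : t * (t + 1)⁻¹ ≤ 1 := by rw [← div_eq_mul_inv, div_le_one (by linarith)]; linarith
  refine ⟨by fun_prop (disch := linarith), hd2.differentiableAt.congr_of_eventuallyEq hderiv,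
    ?_, ?_, ?_⟩
  · rw [abs_of_pos (hlog2.trans_le hL)]
    nlinarith [inv_pos.mpr hlog2]
  · rw [hderiv.eq_of_nhds, abs_of_nonneg (by positivity)]
    linarith
  · rw [hderiv.deriv_eq, hd2.deriv, abs_mul, abs_div, abs_neg, abs_one, abs_pow, abs_pow,
      abs_of_pos (by linarith : 0 < t), abs_of_pos (by linarith : 0 < t + 1), ← div_eq_mul_one_div,
      div_le_iff₀ (by positivity)]
    nlinarith

theorem isSymbol_comp_log {g : ℝ → ℝ} (hg : ContDiff ℝ 2 g) {A : ℝ} (hA : 0 < A)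
    (hbd : ∀ u, 0 ≤ u → ∀ k ≤ 2, |iteratedDeriv k g u| ≤ A) :
    IsSymbol (fun _ => 1) (fun t => g (log t)) := by
  have hg₁ : Differentiable ℝ g := hg.differentiable two_ne_zero
  have hg₂ : Differentiable ℝ (deriv g) :=
    (hg.iterate_deriv' 1 1).differentiable one_ne_zero
  refine ⟨2 * A, by positivity, fun t ht => ?_⟩
  have ht₀ : 0 < t := by linarith
  have hderiv : deriv (fun t => g (log t)) =ᶠ[𝓝 t] fun s => deriv g (log s) * s⁻¹ := by
    filter_upwards [Ioi_mem_nhds ht₀] with s hs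
    exact ((hg₁ _).hasDerivAt.comp s (hasDerivAt_log hs.ne')).deriv
  have hd2 : HasDerivAt (fun s => deriv g (log s) * s⁻¹)
      (deriv (deriv g) (log t) * t⁻¹ * t⁻¹ + deriv g (log t) * -(t ^ 2)⁻¹) t :=
    ((hg₂ _).hasDerivAt.comp t (hasDerivAt_log ht₀.ne')).mul (hasDerivAt_inv ht₀.ne')
  have hu := hbd (log t) (log_nonneg ht.le)
  have h₀ : |g (log t)| ≤ A := hu 0 (by norm_num)
  have h₁ : |deriv g (log t)| ≤ A := by simpa using hu 1 (by norm_num)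
  have h₂ : |deriv (deriv g) (log t)| ≤ A := by
    simpa [iteratedDeriv_succ] using hu 2 le_rfl
  refine ⟨(hg₁ _).comp t (differentiableAt_log ht₀.ne'),
    hd2.differentiableAt.congr_of_eventuallyEq hderiv, by linarith, ?_, ?_⟩
  · rw [hderiv.eq_of_nhds, mul_left_comm, mul_inv_cancel₀ ht₀.ne', mul_one]
    linarith
  · have : t ^ 2 * (deriv (deriv g) (log t) * t⁻¹ * t⁻¹ + deriv g (log t) * -(t ^ 2)⁻¹)
        = deriv (deriv g) (log t) - deriv g (log t) := by field_simp; ring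
    rw [hderiv.deriv_eq, hd2.deriv, this]
    linarith [abs_sub (deriv (deriv g) (log t)) (deriv g (log t))]

theorem log_add_one_le_mul_rpow_div {ε m t : ℝ} (hε : 0 < ε) (hm : 1 ≤ m) (hmt : m ≤ t) :
    log (t + 1) ≤ (1 + (ε * log 2)⁻¹) * (t / m) ^ ε * log (m + 1) := by
  have hm₀ : 0 < m := by linarith
  have hlog2 : 0 < log 2 := log_pos one_lt_two
  have hq : 1 ≤ t / m := (one_le_div hm₀).mpr hmt
  have hqε : 1 ≤ (t / m) ^ ε := one_le_rpow hq hε.le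
  have hL : log 2 ≤ log (m + 1) := log_le_log two_pos (by linarith)
  have hsplit : log (t + 1) ≤ log (m + 1) + log (t / m) := by
    rw [← log_mul (by linarith) (by positivity)]
    refine log_le_log (by linarith) ?_
    rw [mul_div_assoc', le_div_iff₀ hm₀]
    nlinarith
  have hlog_q : log (t / m) ≤ (t / m) ^ ε / ε := log_le_rpow_div (by positivity) hε
  have h₁ : log (m + 1) ≤ (t / m) ^ ε * log (m + 1) := le_mul_of_one_le_left (by linarith) hqε
  have h₂ : (t / m) ^ ε / ε ≤ (ε * log 2)⁻¹ * (t / m) ^ ε * log (m + 1) :=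
    calc (t / m) ^ ε / ε = (ε * log 2)⁻¹ * (t / m) ^ ε * log 2 := by field_simp
      _ ≤ _ := by gcongr
  linarith

theorem exists_rpow_log_add_one_le (a : ℝ) {ε : ℝ} (hε : 0 < ε) :
    ∃ K > 0, ∀ m t : ℝ, 1 ≤ m → m ≤ t →
      log (t + 1) ^ a ≤ K * (t / m) ^ ε * log (m + 1) ^ a := by
  rcases le_or_gt a 0 with ha | ha
  · refine ⟨1, one_pos, fun m t hm hmt => ?_⟩
    have hLm : 0 < log (m + 1) := log_pos (by linarith)
    calc log (t + 1) ^ a ≤ log (m + 1) ^ a :=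
          rpow_le_rpow_of_nonpos hLm (log_le_log (by linarith) (by linarith)) ha
      _ ≤ 1 * (t / m) ^ ε * log (m + 1) ^ a := by
          rw [one_mul]
          exact le_mul_of_one_le_left (by positivity)
            (one_le_rpow ((one_le_div (by linarith)).mpr hmt) hε.le)
  · set c := 1 + (ε / a * log 2)⁻¹
    have hc : 0 < c := by positivity
    refine ⟨c ^ a, by positivity, fun m t hm hmt => ?_⟩
    have hq : 0 ≤ t / m := div_nonneg (by linarith) (by linarith)
    calc log (t + 1) ^ a ≤ (c * (t / m) ^ (ε / a) * log (m + 1)) ^ a :=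
          rpow_le_rpow (log_nonneg (by linarith))
            (log_add_one_le_mul_rpow_div (div_pos hε ha) hm hmt) ha.le
      _ = c ^ a * (t / m) ^ ε * log (m + 1) ^ a := by
          rw [mul_rpow (mul_nonneg hc.le (rpow_nonneg hq _)) (log_nonneg (by linarith)),
            mul_rpow hc.le (rpow_nonneg hq _),
            ← rpow_mul hq, div_mul_cancel₀ _ ha.ne']

theorem exists_integral_Ioi_rpow_mul_rpow_log_le {r : ℝ} (hr : 0 < r) (κ : ℝ) :
    ∃ K > 0, ∀ m : ℝ, 1 ≤ m →
      IntegrableOn (fun t => t ^ (-r - 1) * log (t + 1) ^ (-κ)) (Ioi m) ∧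
      ∫ t in Ioi m, t ^ (-r - 1) * log (t + 1) ^ (-κ) ≤ K * m ^ (-r) * log (m + 1) ^ (-κ) := by
  obtain ⟨K, hK, hKb⟩ := exists_rpow_log_add_one_le (-κ) (half_pos hr)
  refine ⟨2 * K / r, by positivity, fun m hm => ?_⟩
  have hm₀ : 0 < m := by linarith
  -- trade half of the decay of `t ^ (-r - 1)` for the growth of the logarithm
  set c := K * (m ^ (r / 2))⁻¹ * log (m + 1) ^ (-κ)
  have hdom : ∀ t ∈ Ioi m, t ^ (-r - 1) * log (t + 1) ^ (-κ) ≤ c * t ^ (-(r / 2) - 1) := by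
    intro t ht
    have ht₀ : 0 < t := hm₀.trans ht
    calc t ^ (-r - 1) * log (t + 1) ^ (-κ)
        ≤ t ^ (-r - 1) * (K * (t / m) ^ (r / 2) * log (m + 1) ^ (-κ)) :=
          mul_le_mul_of_nonneg_left (hKb m t hm (le_of_lt ht)) (by positivity)
      _ = c * t ^ (-(r / 2) - 1) := by
          rw [div_rpow ht₀.le hm₀.le,
            show -(r / 2) - 1 = (-r - 1) + r / 2 by ring, rpow_add ht₀]
          ring
  have hexp : -(r / 2) - 1 < -1 := by linarith
  have hint : IntegrableOn (fun t => c * t ^ (-(r / 2) - 1)) (Ioi m) :=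
    (integrableOn_Ioi_rpow_of_lt hexp hm₀).const_mul c
  have hf : IntegrableOn (fun t => t ^ (-r - 1) * log (t + 1) ^ (-κ)) (Ioi m) := by
    refine hint.mono' (by fun_prop) ?_
    filter_upwards [ae_restrict_mem measurableSet_Ioi] with t ht
    have ht₀ : 0 < t := hm₀.trans ht
    rw [norm_of_nonneg (mul_nonneg (rpow_nonneg ht₀.le _)
      (rpow_nonneg (log_nonneg (by linarith)) _))]
    exact hdom t ht
  refine ⟨hf, (setIntegral_mono_on hf hint measurableSet_Ioi hdom).trans_eq ?_⟩
  rw [integral_const_mul, integral_Ioi_rpow_of_lt hexp hm₀,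
    show -(r / 2) - 1 + 1 = -(r / 2) by ring, show -r = -(r / 2) + -(r / 2) by ring,
    rpow_add hm₀, rpow_neg hm₀.le]
  simp only [c]
  field_simp

theorem IsMask.isSymbol {r κ : ℝ} {lam : ℝ → ℝ} (h : IsMask r κ lam) :
    IsSymbol (fun t => t ^ (-r) * log (t + 1) ^ (-κ)) lam := by
  obtain ⟨-, -, F, a₁, hF, hlam, hbd⟩ := h
  obtain ⟨A, hA, hAbd⟩ := hF.exists_abs_iteratedDeriv_le_of_forall_ge (c := 0) hbd
  have hprod := ((isSymbol_id.rpow (fun t ht => by linarith) (-r)).mul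
    (isSymbol_log_add_one.rpow (fun t ht => log_pos (by linarith)) (-κ))).mul
    (isSymbol_comp_log hF hA hAbd)
  simpa only [mul_one] using hprod.congr fun t ht => (hlam t ht.le).symm

theorem IsMask.exists_abs_mul_deriv_deriv_le {r κ : ℝ} {lam : ℝ → ℝ} (h : IsMask r κ lam) :
    ∃ C > 0, ∀ t, 1 < t →
      |t * deriv (deriv lam) t| ≤ C * (t ^ (-r - 1) * log (t + 1) ^ (-κ)) := by
  obtain ⟨C, hC, hsym⟩ := h.isSymbol
  refine ⟨C, hC, fun t ht => ?_⟩
  have ht₀ : 0 < t := by linarith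
  have e : |t ^ 2 * deriv (deriv lam) t| = |t * deriv (deriv lam) t| * t := by
    rw [abs_mul, abs_mul, abs_pow, abs_of_pos ht₀]; ring
  rw [rpow_sub_one ht₀.ne', div_mul_eq_mul_div, mul_div_assoc', le_div_iff₀ ht₀, ← e]
  exact (hsym t ht).2.2.2.2

/-- Tail bound on `∫_{|x| ≥ m} |x λ''(x)| dx` for a mask of type `(r,κ)`, `r > 1`. -/
theorem mask_second_derivative_tail_bound (r κ : ℝ) (hr : 1 < r) (lam : ℝ → ℝ)
    (hlam : IsMask r κ lam) :
    ∃ a₃ > (0 : ℝ), ∀ m : ℕ, 1 ≤ m →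
      (∫ x in {x : ℝ | (m : ℝ) ≤ |x|}, |x * deriv (deriv lam) x|) ≤
        a₃ * (m : ℝ) ^ (-r) * (Real.log (m + 1)) ^ (-κ) := by
  obtain ⟨C, hC, hpt⟩ := hlam.exists_abs_mul_deriv_deriv_le
  obtain ⟨K, hK, htail⟩ := exists_integral_Ioi_rpow_mul_rpow_log_le (by linarith : 0 < r) κ
  have heven : (fun x => |x * deriv (deriv lam) x|).Even := fun x => by
    dsimp only
    rw [Function.Even.deriv hlam.1 |>.deriv x, neg_mul, abs_neg]
  refine ⟨2 * C * K, by positivity, fun m hm => ?_⟩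
  have hm₁ : (1 : ℝ) ≤ m := by exact_mod_cast hm
  obtain ⟨hint, hbound⟩ := htail m hm₁
  have hmono : ∫ t in Ioi (m : ℝ), |t * deriv (deriv lam) t|
      ≤ C * ∫ t in Ioi (m : ℝ), t ^ (-r - 1) * log (t + 1) ^ (-κ) := by
    rw [← integral_const_mul]
    refine integral_mono_of_nonneg (.of_forall fun t => abs_nonneg _) (hint.const_mul C) ?_
    filter_upwards [ae_restrict_mem measurableSet_Ioi] with t ht
    exact hpt t (hm₁.trans_lt ht)
  rw [integral_abs_ge_eq_two_mul_of_even heven (by linarith)]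
  calc 2 * ∫ t in Ioi (m : ℝ), |t * deriv (deriv lam) t|
      ≤ 2 * (C * (K * (m : ℝ) ^ (-r) * log (m + 1) ^ (-κ))) := by
        gcongr
        exact hmono.trans (mul_le_mul_of_nonneg_left hbound hC.le)
    _ = 2 * C * K * (m : ℝ) ^ (-r) * log (m + 1) ^ (-κ) := by ring
end

section
/- For d ≥ 1 and m → ∞, the cardinality of the sparse Smolyak grid satisfies ∑_{k ∈ ℤ₊^d, |k| ≤ m} ∏_{j=1}^d (2^{k_j + 1} + 1) ≍ 2^m m^{d-1}, i.e. there exist positive constants c₁, c₂ (depending only on d) such that c₁ 2^m m^{d-1} ≤ ∑_{|k| ≤ m} ∏_{j=1}^d (2^{k_j+1}+1) ≤ c₂ 2^m m^{d-1} for all m ≥ 1. -/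
/-!
Group the multi-indices by their level `s = |k|`. By stars and bars the `s`-th layer has
`C(s + d - 1, d - 1)` elements, and on it every term lies between `2^s` and `3^d 2^s`. The top
layer `s = m` alone gives the lower bound `C(m + d - 1, d - 1) 2^m ≥ m^(d-1) 2^m / (d-1)!`. For the
upper bound, every layer count is at most the top one, `∑_{s ≤ m} 2^s < 2^(m+1)`, and
`C(m + d - 1, d - 1) ≤ (d m)^(d-1)`.
-/

open Finset

theorem Finset.Nat.card_antidiagonalTuple (d s : ℕ) :
    #(Nat.antidiagonalTuple d s) = (d + s - 1).choose s := by
  have e : Nat.antidiagonalTuple d s ≃ Sym (Fin d) s :=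
    (Equiv.subtypeEquivRight fun _ => Nat.mem_antidiagonalTuple).trans
      (Sym.equivNatSumOfFintype (Fin d) s).symm
  rw [card_eq_of_equiv_fintype e, Sym.card_sym_eq_choose, Fintype.card_fin]

theorem card_antidiagonalTuple_succ (e s : ℕ) :
    #(Nat.antidiagonalTuple (e + 1) s) = (s + e).choose e := by
  rw [Nat.card_antidiagonalTuple, show e + 1 + s - 1 = s + e by omega, Nat.choose_symm_add]

theorem sum_sum_le_eq_sum_range_sum_antidiagonalTuple {M : Type*} [AddCommMonoid M] (d m : ℕ)
    (f : (Fin d → ℕ) → M) :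
    ∑ k ∈ (Fintype.piFinset fun _ : Fin d => range (m + 1)) with ∑ j, k j ≤ m, f k =
      ∑ s ∈ range (m + 1), ∑ k ∈ Nat.antidiagonalTuple d s, f k := by
  refine (sum_fiberwise_of_maps_to (g := fun k => ∑ j, k j) (t := range (m + 1))
    (fun k hk => mem_range_succ_iff.mpr (mem_filter.mp hk).2) f).symm.trans ?_
  refine sum_congr rfl fun s hs => sum_congr (ext fun k => ?_) fun _ _ => rfl
  have hsm := mem_range_succ_iff.mp hs
  simp only [mem_filter, Fintype.mem_piFinset, mem_range_succ_iff, Nat.mem_antidiagonalTuple]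
  constructor
  · exact fun h => h.2
  · rintro rfl
    exact ⟨⟨fun j => (single_le_sum (by simp) (mem_univ j)).trans hsm, hsm⟩, rfl⟩

theorem two_pow_sum_le_prod_two_pow_succ_add_one {ι : Type*} [Fintype ι] (k : ι → ℕ) :
    (2 : ℝ) ^ (∑ j, k j) ≤ ∏ j, ((2 : ℝ) ^ (k j + 1) + 1) := by
  rw [← prod_pow_eq_pow_sum]
  gcongr with j
  calc (2 : ℝ) ^ k j ≤ 2 ^ (k j + 1) := pow_le_pow_right₀ one_le_two (k j).le_succ
    _ ≤ 2 ^ (k j + 1) + 1 := le_add_of_nonneg_right zero_le_one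

theorem prod_two_pow_succ_add_one_le {ι : Type*} [Fintype ι] (k : ι → ℕ) :
    ∏ j, ((2 : ℝ) ^ (k j + 1) + 1) ≤ 3 ^ Fintype.card ι * 2 ^ (∑ j, k j) := by
  calc ∏ j, ((2 : ℝ) ^ (k j + 1) + 1) ≤ ∏ j, (3 * (2 : ℝ) ^ k j) := by
        gcongr with j
        have : (1 : ℝ) ≤ 2 ^ k j := one_le_pow₀ one_le_two
        rw [pow_succ]
        linarith
    _ = 3 ^ Fintype.card ι * 2 ^ (∑ j, k j) := by
        rw [prod_mul_distrib, prod_const, card_univ, prod_pow_eq_pow_sum]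

theorem card_mul_two_pow_le_sum_antidiagonalTuple (d s : ℕ) :
    #(Nat.antidiagonalTuple d s) * (2 : ℝ) ^ s ≤
      ∑ k ∈ Nat.antidiagonalTuple d s, ∏ j, ((2 : ℝ) ^ (k j + 1) + 1) := by
  rw [← nsmul_eq_mul]
  refine card_nsmul_le_sum _ _ _ fun k hk => ?_
  rw [← Nat.mem_antidiagonalTuple.mp hk]
  exact two_pow_sum_le_prod_two_pow_succ_add_one k

theorem sum_antidiagonalTuple_le (d s : ℕ) :
    ∑ k ∈ Nat.antidiagonalTuple d s, ∏ j, ((2 : ℝ) ^ (k j + 1) + 1) ≤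
      3 ^ d * #(Nat.antidiagonalTuple d s) * (2 : ℝ) ^ s := by
  rw [mul_right_comm, mul_comm, ← nsmul_eq_mul]
  refine sum_le_card_nsmul _ _ _ fun k hk => ?_
  rw [← Nat.mem_antidiagonalTuple.mp hk]
  simpa only [Fintype.card_fin] using prod_two_pow_succ_add_one_le k

theorem pow_div_factorial_le_choose_add (m e : ℕ) :
    (m : ℝ) ^ e / e.factorial ≤ (m + e).choose e := by
  refine le_trans ?_ (Nat.pow_le_choose e (m + e))
  gcongr
  exact_mod_cast Nat.le_sub_of_add_le (by omega)

theorem choose_add_le_pow_mul_pow {m : ℕ} (hm : 1 ≤ m) (e : ℕ) :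
    (m + e).choose e ≤ (e + 1) ^ e * m ^ e := by
  rw [← mul_pow]
  exact (Nat.choose_le_pow _ _).trans (Nat.pow_le_pow_left (by nlinarith) e)

/-- Cardinality of the Smolyak grid: `∑_{|k| ≤ m} ∏_j (2^{k_j+1}+1) ≍ 2^m m^{d-1}`. -/
theorem smolyak_grid_cardinality (d : ℕ) (hd : 1 ≤ d) :
    ∃ c₁ > (0 : ℝ), ∃ c₂ > (0 : ℝ), ∀ m : ℕ, 1 ≤ m →
      c₁ * 2 ^ m * (m : ℝ) ^ (d - 1) ≤
        (∑ k ∈ (Fintype.piFinset fun _ : Fin d => Finset.range (m + 1)) |>.filter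
            (fun k => ∑ j, k j ≤ m),
          ∏ j, ((2 : ℝ) ^ (k j + 1) + 1)) ∧
      (∑ k ∈ (Fintype.piFinset fun _ : Fin d => Finset.range (m + 1)) |>.filter
            (fun k => ∑ j, k j ≤ m),
          ∏ j, ((2 : ℝ) ^ (k j + 1) + 1)) ≤
        c₂ * 2 ^ m * (m : ℝ) ^ (d - 1) := by
  obtain ⟨e, rfl⟩ : ∃ e, d = e + 1 := ⟨d - 1, by omega⟩
  refine ⟨1 / e.factorial, by positivity, 2 * 3 ^ (e + 1) * (e + 1) ^ e, by positivity,
    fun m hm => ?_⟩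
  rw [Nat.add_sub_cancel, sum_sum_le_eq_sum_range_sum_antidiagonalTuple]
  constructor
  · calc 1 / e.factorial * 2 ^ m * (m : ℝ) ^ e = (m : ℝ) ^ e / e.factorial * 2 ^ m := by ring
      _ ≤ (m + e).choose e * 2 ^ m := by gcongr; exact pow_div_factorial_le_choose_add m e
      _ ≤ ∑ k ∈ Nat.antidiagonalTuple (e + 1) m, ∏ j, ((2 : ℝ) ^ (k j + 1) + 1) := by
        rw [← card_antidiagonalTuple_succ]; exact card_mul_two_pow_le_sum_antidiagonalTuple _ _
      _ ≤ _ := by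
        apply single_le_sum (fun _ _ => ?_) (self_mem_range_succ m)
        positivity
  · calc _ ≤ ∑ s ∈ range (m + 1), 3 ^ (e + 1) * ((m + e).choose e : ℝ) * 2 ^ s := by
          refine sum_le_sum fun s hs => (sum_antidiagonalTuple_le _ _).trans ?_
          rw [card_antidiagonalTuple_succ]
          gcongr
          exact mem_range_succ_iff.mp hs
      _ = 3 ^ (e + 1) * ((m + e).choose e : ℝ) * ∑ s ∈ range (m + 1), (2 : ℝ) ^ s := by
          rw [mul_sum]
      _ ≤ 3 ^ (e + 1) * ((e + 1) ^ e * m ^ e : ℕ) * 2 ^ (m + 1) := by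
          gcongr
          · exact choose_add_le_pow_mul_pow hm e
          · exact_mod_cast (Nat.geomSum_lt le_rfl fun _ => mem_range.mp).le
      _ = 2 * 3 ^ (e + 1) * (e + 1) ^ e * 2 ^ m * (m : ℝ) ^ e := by push_cast; ring
end

section
/- For d ≥ 1 and a → ∞, the cardinality of the hyperbolic cross ℍ(a) := { k ∈ ℤ^d : ∏_{j=1}^d |k_j| ≤ a } (with the convention that the product is over coordinates, and k_j ≠ 0 for all j, or alternatively ∏ max(|k_j|,1) ≤ a) satisfies |ℍ(a)| ≍ a (log a)^{d-1}: there exist positive constants c₁, c₂ (depending only on d) such that c₁ a (log a)^{d-1} ≤ |ℍ(a)| ≤ c₂ a (log a)^{d-1} for all a ≥ 2. -/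
/-!
Record each coordinate `k j` of a point of the hyperbolic cross by its sign and by the positive
integer `max |k j| 1`: this squeezes the cardinality between `N` and `3 ^ d * N`, where `N` counts
the tuples `n` of positive integers with `∏ n j ≤ a`. Fixing all coordinates `t` but the first,
that coordinate ranges over `[1, a / ∏ t]`, so `N = ∑_t ⌊a / ∏ t⌋`. Now `⌊x⌋ ≤ x` gives
`N ≤ a * H_a ^ (d - 1)` with `H` the harmonic numbers, while `⌊x⌋ ≥ x / 2` for `x ≥ 1`, applied to
the tuples `t ∈ [1, M] ^ (d - 1)` with `M = ⌊a ^ (1 / d)⌋`, gives `N ≥ a / 2 * H_M ^ (d - 1)`.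
Finally `log (n + 1) ≤ H_n ≤ 1 + log n`.
-/

open Finset

theorem Int.sign_mul_max_natAbs_one (z : ℤ) : (SignType.sign z : ℤ) * (max z.natAbs 1 : ℕ) = z := by
  rcases eq_or_ne z 0 with rfl | hz
  · simp
  · rw [max_eq_left (Int.natAbs_pos.mpr hz), Int.natCast_natAbs, _root_.sign_mul_abs]

def hyperbolicCross (ι : Type*) [Fintype ι] (a : ℕ) : Set (ι → ℤ) :=
  {k | ∏ j, max (k j).natAbs 1 ≤ a}

def hyperbolicCrossPos (ι : Type*) [Fintype ι] [DecidableEq ι] (a : ℕ) : Finset (ι → ℕ) :=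
  {n ∈ Fintype.piFinset fun _ : ι => Icc 1 a | ∏ j, n j ≤ a}

section
variable {ι : Type*} [Fintype ι]

theorem hyperbolicCross_subset_image_sign_mul [DecidableEq ι] (a : ℕ) :
    hyperbolicCross ι a ⊆ ((hyperbolicCrossPos ι a ×ˢ univ).image
      fun (p : (ι → ℕ) × (ι → SignType)) j => (p.2 j : ℤ) * p.1 j : Finset (ι → ℤ)) := by
  intro k (hk : ∏ j, max (k j).natAbs 1 ≤ a)
  simp only [coe_image, Set.mem_image, mem_coe, mem_product, hyperbolicCrossPos, mem_filter,
    Fintype.mem_piFinset, mem_Icc, mem_univ, and_true, Prod.exists]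
  refine ⟨fun j => max (k j).natAbs 1, fun j => SignType.sign (k j),
    ⟨fun j => ⟨le_max_right _ _, ?_⟩, hk⟩, funext fun j => Int.sign_mul_max_natAbs_one _⟩
  exact (single_le_prod' (fun i _ => le_max_right (k i).natAbs 1) (mem_univ j)).trans hk

theorem hyperbolicCross_finite (a : ℕ) : (hyperbolicCross ι a).Finite := by
  classical exact (Finset.finite_toSet _).subset (hyperbolicCross_subset_image_sign_mul a)

theorem ncard_hyperbolicCross_le [DecidableEq ι] (a : ℕ) :
    (hyperbolicCross ι a).ncard ≤ 3 ^ Fintype.card ι * #(hyperbolicCrossPos ι a) := by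
  refine (Set.ncard_le_ncard (hyperbolicCross_subset_image_sign_mul a)).trans ?_
  rw [Set.ncard_coe_finset]
  refine card_image_le.trans ?_
  rw [card_product, card_univ, Fintype.card_fun, mul_comm]
  rfl

theorem card_hyperbolicCrossPos_le_ncard [DecidableEq ι] (a : ℕ) :
    #(hyperbolicCrossPos ι a) ≤ (hyperbolicCross ι a).ncard := by
  have hinj : Function.Injective fun (n : ι → ℕ) j => (n j : ℤ) :=
    fun n n' h => funext fun j => Int.ofNat_inj.mp (congrFun h j)
  rw [← card_image_of_injective _ hinj, ← Set.ncard_coe_finset]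
  refine Set.ncard_le_ncard ?_ (hyperbolicCross_finite a)
  intro k hk
  simp only [coe_image, Set.mem_image, mem_coe, hyperbolicCrossPos, mem_filter,
    Fintype.mem_piFinset, mem_Icc] at hk
  obtain ⟨n, ⟨hn, hprod⟩, rfl⟩ := hk
  simpa [hyperbolicCross, Int.natAbs_natCast, max_eq_left (hn _).1] using hprod

end

theorem Nat.Icc_filter_mul_le_eq_Icc_div {P : ℕ} (hP : 0 < P) (a : ℕ) :
    {m ∈ Icc 1 a | m * P ≤ a} = Icc 1 (a / P) := by
  ext m
  simp only [mem_filter, mem_Icc, Nat.le_div_iff_mul_le hP]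
  exact ⟨fun h => ⟨h.1.1, h.2⟩, fun h => ⟨⟨h.1, le_of_mul_le_of_one_le_left h.2 hP⟩, h.2⟩⟩

theorem card_hyperbolicCrossPos_succ (e a : ℕ) :
    #(hyperbolicCrossPos (Fin (e + 1)) a) =
      ∑ t ∈ Fintype.piFinset (fun _ : Fin e => Icc 1 a), a / ∏ j, t j := by
  have hsplit : hyperbolicCrossPos (Fin (e + 1)) a =
      ({p ∈ Icc 1 a ×ˢ Fintype.piFinset fun _ : Fin e => Icc 1 a | p.1 * ∏ j, p.2 j ≤ a}).map
        (Fin.consEquiv fun _ => ℕ).toEmbedding := by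
    ext n
    simp [hyperbolicCrossPos, Fin.prod_univ_succ, Fin.forall_fin_succ, Fin.tail, and_assoc]
  rw [hsplit, card_map, card_filter, sum_product_right]
  refine sum_congr rfl fun t ht => ?_
  have hP : 0 < ∏ j, t j := prod_pos fun j _ => (mem_Icc.mp (Fintype.mem_piFinset.mp ht j)).1
  rw [← card_filter, Nat.Icc_filter_mul_le_eq_Icc_div hP, Nat.card_Icc, Nat.add_sub_cancel]

theorem sum_piFinset_Icc_prod_inv {ι : Type*} [Fintype ι] [DecidableEq ι] (m : ℕ) :
    ∑ t ∈ Fintype.piFinset (fun _ : ι => Icc 1 m), (∏ j, (t j : ℝ))⁻¹ =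
      (harmonic m : ℝ) ^ Fintype.card ι := by
  have h := prod_univ_sum (fun _ : ι => Icc 1 m) fun _ i => (i : ℝ)⁻¹
  rw [prod_const, card_univ] at h
  simp_rw [harmonic_eq_sum_Icc, Rat.cast_sum, Rat.cast_inv, Rat.cast_natCast, h, prod_inv_distrib]

theorem Nat.cast_div_two_mul_le_cast_div {K : Type*} [Field K] [LinearOrder K]
    [IsStrictOrderedRing K] {a P : ℕ} (hP : 0 < P) (hPa : P ≤ a) :
    (a : K) / (2 * P) ≤ (a / P : ℕ) := by
  have hlt : a < a / P * P + P := Nat.lt_div_mul_add hP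
  have hq : 1 ≤ a / P := (Nat.one_le_div_iff hP).mpr hPa
  have hle : a ≤ 2 * P * (a / P) := by nlinarith
  rw [div_le_iff₀ (by positivity)]
  exact_mod_cast hle.trans_eq (mul_comm _ _)

theorem card_hyperbolicCrossPos_succ_le (e a : ℕ) :
    (#(hyperbolicCrossPos (Fin (e + 1)) a) : ℝ) ≤ a * (harmonic a : ℝ) ^ e := by
  have hharm := sum_piFinset_Icc_prod_inv (ι := Fin e) a
  rw [Fintype.card_fin] at hharm
  rw [card_hyperbolicCrossPos_succ, ← hharm, mul_sum, Nat.cast_sum]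
  refine sum_le_sum fun t _ => (Nat.cast_div_le (α := ℝ)).trans_eq ?_
  push_cast
  rw [div_eq_mul_inv]

theorem half_mul_harmonic_pow_le_card_hyperbolicCrossPos_succ {e a M : ℕ} (hMa : M ≤ a)
    (hMe : M ^ e ≤ a) :
    (a : ℝ) / 2 * (harmonic M : ℝ) ^ e ≤ #(hyperbolicCrossPos (Fin (e + 1)) a) := by
  have hterm : ∀ t ∈ Fintype.piFinset (fun _ : Fin e => Icc 1 M),
      (a : ℝ) / 2 * (∏ j, (t j : ℝ))⁻¹ ≤ (a / ∏ j, t j : ℕ) := by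
    intro t ht
    have hbounds : ∀ j, 1 ≤ t j ∧ t j ≤ M := fun j => mem_Icc.mp (Fintype.mem_piFinset.mp ht j)
    have hP : 0 < ∏ j, t j := prod_pos fun j _ => (hbounds j).1
    have hPa : ∏ j, t j ≤ a := calc
      ∏ j, t j ≤ ∏ _j : Fin e, M := prod_le_prod' fun j _ => (hbounds j).2
      _ = M ^ e := by simp
      _ ≤ a := hMe
    rw [← div_eq_mul_inv, div_div]
    exact_mod_cast Nat.cast_div_two_mul_le_cast_div (K := ℝ) hP hPa
  calc (a : ℝ) / 2 * (harmonic M : ℝ) ^ e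
      = ∑ t ∈ Fintype.piFinset (fun _ : Fin e => Icc 1 M), (a : ℝ) / 2 * (∏ j, (t j : ℝ))⁻¹ := by
        rw [← mul_sum, sum_piFinset_Icc_prod_inv, Fintype.card_fin]
    _ ≤ ∑ t ∈ Fintype.piFinset (fun _ : Fin e => Icc 1 M), ((a / ∏ j, t j : ℕ) : ℝ) :=
        sum_le_sum hterm
    _ ≤ ∑ t ∈ Fintype.piFinset (fun _ : Fin e => Icc 1 a), ((a / ∏ j, t j : ℕ) : ℝ) :=
        sum_le_sum_of_subset_of_nonneg
          (Fintype.piFinset_subset _ _ fun _ => Icc_subset_Icc_right hMa) fun _ _ _ => by positivity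
    _ = #(hyperbolicCrossPos (Fin (e + 1)) a) := by
        rw [card_hyperbolicCrossPos_succ, Nat.cast_sum]

theorem harmonic_le_mul_log {n : ℕ} (hn : 2 ≤ n) :
    (harmonic n : ℝ) ≤ (1 + (Real.log 2)⁻¹) * Real.log n := by
  have hlog2 : 0 < Real.log 2 := Real.log_pos one_lt_two
  have hlog : Real.log 2 ≤ Real.log n := Real.log_le_log two_pos (by exact_mod_cast hn)
  have h1 : 1 ≤ (Real.log 2)⁻¹ * Real.log n := by
    rw [← div_eq_inv_mul, one_le_div hlog2]; exact hlog
  linarith [harmonic_le_one_add_log n]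

theorem exists_le_pow_le_log_div_le_harmonic (e : ℕ) {a : ℕ} (ha : 1 ≤ a) :
    ∃ M : ℕ, M ≤ a ∧ M ^ e ≤ a ∧ Real.log a / (e + 1) ≤ harmonic M := by
  set M := Nat.nthRoot (e + 1) a
  have hM : M ^ (e + 1) ≤ a := Nat.pow_nthRoot_le_iff.mpr (.inl e.succ_ne_zero)
  have hM1 : 1 ≤ M := (Nat.le_nthRoot_iff e.succ_ne_zero).mpr (by simpa using ha)
  refine ⟨M, (Nat.le_self_pow e.succ_ne_zero M).trans hM,
    (Nat.pow_le_pow_right hM1 e.le_succ).trans hM, ?_⟩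
  have hroot : (a : ℝ) ≤ ((M + 1 : ℕ) : ℝ) ^ (e + 1) := by
    exact_mod_cast (Nat.lt_pow_nthRoot_add_one e.succ_ne_zero a).le
  rw [div_le_iff₀ (by positivity)]
  calc Real.log a ≤ Real.log (((M + 1 : ℕ) : ℝ) ^ (e + 1)) :=
        Real.log_le_log (by exact_mod_cast ha) hroot
    _ = Real.log ((M + 1 : ℕ) : ℝ) * (e + 1) := by rw [Real.log_pow, mul_comm]; push_cast; ring
    _ ≤ harmonic M * (e + 1) := by gcongr; exact log_add_one_le_harmonic M

theorem le_ncard_hyperbolicCross (e : ℕ) {a : ℕ} (ha : 1 ≤ a) :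
    1 / (2 * (e + 1) ^ e) * a * Real.log a ^ e ≤ (hyperbolicCross (Fin (e + 1)) a).ncard := by
  obtain ⟨M, hMa, hMe, hM⟩ := exists_le_pow_le_log_div_le_harmonic e ha
  have hlog : 0 ≤ Real.log a := Real.log_nonneg (by exact_mod_cast ha)
  calc 1 / (2 * (e + 1) ^ e) * a * Real.log a ^ e = a / 2 * (Real.log a / (e + 1)) ^ e := by
        rw [div_pow]; field_simp
    _ ≤ a / 2 * (harmonic M : ℝ) ^ e := by gcongr
    _ ≤ #(hyperbolicCrossPos (Fin (e + 1)) a) :=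
        half_mul_harmonic_pow_le_card_hyperbolicCrossPos_succ hMa hMe
    _ ≤ (hyperbolicCross (Fin (e + 1)) a).ncard := by
        exact_mod_cast card_hyperbolicCrossPos_le_ncard a

theorem ncard_hyperbolicCross_le_mul_log_pow (e : ℕ) {a : ℕ} (ha : 2 ≤ a) :
    ((hyperbolicCross (Fin (e + 1)) a).ncard : ℝ) ≤
      3 ^ (e + 1) * (1 + (Real.log 2)⁻¹) ^ e * a * Real.log a ^ e := by
  have hharm : (0 : ℝ) ≤ harmonic a := by exact_mod_cast (harmonic_pos (by omega)).le
  calc ((hyperbolicCross (Fin (e + 1)) a).ncard : ℝ)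
      ≤ 3 ^ (e + 1) * #(hyperbolicCrossPos (Fin (e + 1)) a) := by
        exact_mod_cast (Fintype.card_fin (e + 1)) ▸ ncard_hyperbolicCross_le a
    _ ≤ 3 ^ (e + 1) * (a * (harmonic a : ℝ) ^ e) := by
        gcongr; exact card_hyperbolicCrossPos_succ_le e a
    _ ≤ 3 ^ (e + 1) * (a * ((1 + (Real.log 2)⁻¹) * Real.log a) ^ e) := by
        gcongr; exact harmonic_le_mul_log ha
    _ = 3 ^ (e + 1) * (1 + (Real.log 2)⁻¹) ^ e * a * Real.log a ^ e := by
        rw [mul_pow]; ring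

/-- Cardinality of the hyperbolic cross
`ℍ(a) = { k ∈ ℤ^d : ∏_j max(|k_j|,1) ≤ a }` is of order `a (log a)^{d-1}`. -/
theorem hyperbolic_cross_cardinality (d : ℕ) (hd : 1 ≤ d) :
    ∃ c₁ > (0 : ℝ), ∃ c₂ > (0 : ℝ), ∀ a : ℕ, 2 ≤ a →
      c₁ * a * (Real.log a) ^ (d - 1) ≤
        (Nat.card {k : Fin d → ℤ // ∏ j, max (k j).natAbs 1 ≤ a} : ℝ) ∧
      (Nat.card {k : Fin d → ℤ // ∏ j, max (k j).natAbs 1 ≤ a} : ℝ) ≤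
        c₂ * a * (Real.log a) ^ (d - 1) := by
  obtain ⟨e, rfl⟩ : ∃ e, d = e + 1 := ⟨d - 1, by omega⟩
  refine ⟨1 / (2 * (e + 1) ^ e), by positivity, 3 ^ (e + 1) * (1 + (Real.log 2)⁻¹) ^ e,
    by positivity, fun a ha => ?_⟩
  have hcard : Nat.card {k : Fin (e + 1) → ℤ // ∏ j, max (k j).natAbs 1 ≤ a} =
      (hyperbolicCross (Fin (e + 1)) a).ncard := Nat.card_coe_set_eq _
  rw [hcard, Nat.add_sub_cancel]
  exact ⟨le_ncard_hyperbolicCross e (by omega), ncard_hyperbolicCross_le_mul_log_pow e ha⟩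
end
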